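/- In an Ann-category 𝒜, for every object A the ⊕-functors (L^A = A ⊗ −, 𝔏_{A,−,−}) and (R^A = − ⊗ A, ℜ_{−,−,A}) are compatible with the unit constraint (0, g, d) of the operation ⊕, i.e. besides the defining equations g_{A⊗X} ∘ (L̂^A ⊕ id_{A⊗X}) ∘ 𝔏_{A,0,X} = id_A ⊗ g_X and g_{X⊗A} ∘ (R̂^A ⊕ id_{X⊗A}) ∘ ℜ_{0,X,A} = g_X ⊗ id_A, the isomorphisms L̂^A : A ⊗ 0 → 0 and R̂^A : 0 ⊗ A → 0 also satisfy d_{A⊗X} ∘ (id_{A⊗X} ⊕ L̂^A) ∘ 𝔏_{A,X,0} = id_A ⊗ d_X and d_{X⊗A} ∘ (id_{X⊗A} ⊕ R̂^A) ∘ ℜ_{X,0,A} = d_X ⊗ id_A for every object X; in other words, L^A and R^A are U-functors with respect to ⊕. -/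
import Mathlib


open CategoryTheory

universe v u

/-- An Ann-category: a groupoid with a symmetric monoidal (Picard) structure `⊕`
(`add`, constraints `aPlus`, `csym`, unit `zero` with `gl`, `dr`), a monoidal
structure `⊗` (`mul`, constraint `aMul`, unit `one` with `lu`, `ru`), and
distributivity isomorphisms `distL` (𝔏) and `distR` (ℜ) satisfying (Ann-1),
(Ann-2) and (Ann-3). -/
structure AnnCat (C : Type u) [Groupoid.{v} C] where
  add : C → C → C
  addHom : ∀ {X₁ Y₁ X₂ Y₂ : C}, (X₁ ⟶ Y₁) → (X₂ ⟶ Y₂) → (add X₁ X₂ ⟶ add Y₁ Y₂)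
  addHom_id : ∀ (X Y : C), addHom (𝟙 X) (𝟙 Y) = 𝟙 (add X Y)
  addHom_comp : ∀ {X₁ Y₁ Z₁ X₂ Y₂ Z₂ : C} (f₁ : X₁ ⟶ Y₁) (g₁ : Y₁ ⟶ Z₁)
    (f₂ : X₂ ⟶ Y₂) (g₂ : Y₂ ⟶ Z₂),
    addHom (f₁ ≫ g₁) (f₂ ≫ g₂) = addHom f₁ f₂ ≫ addHom g₁ g₂
  zero : C
  aPlus : ∀ (X Y Z : C), add X (add Y Z) ≅ add (add X Y) Z
  aPlus_natural : ∀ {X X' Y Y' Z Z' : C} (f : X ⟶ X') (g : Y ⟶ Y') (h : Z ⟶ Z'),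
    addHom f (addHom g h) ≫ (aPlus X' Y' Z').hom
      = (aPlus X Y Z).hom ≫ addHom (addHom f g) h
  csym : ∀ (X Y : C), add X Y ≅ add Y X
  csym_natural : ∀ {X X' Y Y' : C} (f : X ⟶ X') (g : Y ⟶ Y'),
    addHom f g ≫ (csym X' Y').hom = (csym X Y).hom ≫ addHom g f
  csym_symm : ∀ (X Y : C), (csym X Y).hom ≫ (csym Y X).hom = 𝟙 (add X Y)
  gl : ∀ (X : C), add zero X ≅ X
  gl_natural : ∀ {X Y : C} (f : X ⟶ Y), addHom (𝟙 zero) f ≫ (gl Y).hom = (gl X).hom ≫ f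
  dr : ∀ (X : C), add X zero ≅ X
  dr_natural : ∀ {X Y : C} (f : X ⟶ Y), addHom f (𝟙 zero) ≫ (dr Y).hom = (dr X).hom ≫ f
  add_pentagon : ∀ (W X Y Z : C),
    addHom (𝟙 W) (aPlus X Y Z).hom ≫ (aPlus W (add X Y) Z).hom
        ≫ addHom (aPlus W X Y).hom (𝟙 Z)
      = (aPlus W X (add Y Z)).hom ≫ (aPlus (add W X) Y Z).hom
  add_triangle : ∀ (X Y : C),
    (aPlus X zero Y).hom ≫ addHom (dr X).hom (𝟙 Y) = addHom (𝟙 X) (gl Y).hom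
  add_hexagon : ∀ (X Y Z : C),
    (aPlus X Y Z).hom ≫ (csym (add X Y) Z).hom ≫ (aPlus Z X Y).hom
      = addHom (𝟙 X) (csym Y Z).hom ≫ (aPlus X Z Y).hom ≫ addHom (csym X Z).hom (𝟙 Y)
  add_inv : ∀ X : C, ∃ X' : C, Nonempty (add X X' ≅ zero)
  mul : C → C → C
  mulHom : ∀ {X₁ Y₁ X₂ Y₂ : C}, (X₁ ⟶ Y₁) → (X₂ ⟶ Y₂) → (mul X₁ X₂ ⟶ mul Y₁ Y₂)
  mulHom_id : ∀ (X Y : C), mulHom (𝟙 X) (𝟙 Y) = 𝟙 (mul X Y)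
  mulHom_comp : ∀ {X₁ Y₁ Z₁ X₂ Y₂ Z₂ : C} (f₁ : X₁ ⟶ Y₁) (g₁ : Y₁ ⟶ Z₁)
    (f₂ : X₂ ⟶ Y₂) (g₂ : Y₂ ⟶ Z₂),
    mulHom (f₁ ≫ g₁) (f₂ ≫ g₂) = mulHom f₁ f₂ ≫ mulHom g₁ g₂
  one : C
  aMul : ∀ (X Y Z : C), mul X (mul Y Z) ≅ mul (mul X Y) Z
  aMul_natural : ∀ {X X' Y Y' Z Z' : C} (f : X ⟶ X') (g : Y ⟶ Y') (h : Z ⟶ Z'),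
    mulHom f (mulHom g h) ≫ (aMul X' Y' Z').hom
      = (aMul X Y Z).hom ≫ mulHom (mulHom f g) h
  lu : ∀ (X : C), mul one X ≅ X
  lu_natural : ∀ {X Y : C} (f : X ⟶ Y), mulHom (𝟙 one) f ≫ (lu Y).hom = (lu X).hom ≫ f
  ru : ∀ (X : C), mul X one ≅ X
  ru_natural : ∀ {X Y : C} (f : X ⟶ Y), mulHom f (𝟙 one) ≫ (ru Y).hom = (ru X).hom ≫ f
  mul_pentagon : ∀ (W X Y Z : C),
    mulHom (𝟙 W) (aMul X Y Z).hom ≫ (aMul W (mul X Y) Z).hom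
        ≫ mulHom (aMul W X Y).hom (𝟙 Z)
      = (aMul W X (mul Y Z)).hom ≫ (aMul (mul W X) Y Z).hom
  mul_triangle : ∀ (X Y : C),
    (aMul X one Y).hom ≫ mulHom (ru X).hom (𝟙 Y) = mulHom (𝟙 X) (lu Y).hom
  distL : ∀ (A X Y : C), mul A (add X Y) ≅ add (mul A X) (mul A Y)
  distL_natural : ∀ {A A' X X' Y Y' : C} (f : A ⟶ A') (u : X ⟶ X') (w : Y ⟶ Y'),
    mulHom f (addHom u w) ≫ (distL A' X' Y').hom
      = (distL A X Y).hom ≫ addHom (mulHom f u) (mulHom f w)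
  distR : ∀ (X Y A : C), mul (add X Y) A ≅ add (mul X A) (mul Y A)
  distR_natural : ∀ {X X' Y Y' A A' : C} (u : X ⟶ X') (w : Y ⟶ Y') (f : A ⟶ A'),
    mulHom (addHom u w) f ≫ (distR X' Y' A').hom
      = (distR X Y A).hom ≫ addHom (mulHom u f) (mulHom w f)
  -- (Ann-1): (A ⊗ −, 𝔏) and (− ⊗ A, ℜ) are ⊕-functors compatible with a⁺ and c
  distL_aPlus : ∀ (A X Y Z : C),
    mulHom (𝟙 A) (aPlus X Y Z).hom ≫ (distL A (add X Y) Z).hom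
        ≫ addHom (distL A X Y).hom (𝟙 (mul A Z))
      = (distL A X (add Y Z)).hom ≫ addHom (𝟙 (mul A X)) (distL A Y Z).hom
        ≫ (aPlus (mul A X) (mul A Y) (mul A Z)).hom
  distL_csym : ∀ (A X Y : C),
    mulHom (𝟙 A) (csym X Y).hom ≫ (distL A Y X).hom
      = (distL A X Y).hom ≫ (csym (mul A X) (mul A Y)).hom
  distR_aPlus : ∀ (X Y Z A : C),
    mulHom (aPlus X Y Z).hom (𝟙 A) ≫ (distR (add X Y) Z A).hom
        ≫ addHom (distR X Y A).hom (𝟙 (mul Z A))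
      = (distR X (add Y Z) A).hom ≫ addHom (𝟙 (mul X A)) (distR Y Z A).hom
        ≫ (aPlus (mul X A) (mul Y A) (mul Z A)).hom
  distR_csym : ∀ (X Y A : C),
    mulHom (csym X Y).hom (𝟙 A) ≫ (distR Y X A).hom
      = (distR X Y A).hom ≫ (csym (mul X A) (mul Y A)).hom
  -- (Ann-2)
  ann11 : ∀ (A B X Y : C),
    mulHom (𝟙 A) (distL B X Y).hom ≫ (distL A (mul B X) (mul B Y)).hom
        ≫ addHom (aMul A B X).hom (aMul A B Y).hom
      = (aMul A B (add X Y)).hom ≫ (distL (mul A B) X Y).hom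
  ann11' : ∀ (X Y B A : C),
    (aMul (add X Y) B A).hom ≫ mulHom (distR X Y B).hom (𝟙 A)
        ≫ (distR (mul X B) (mul Y B) A).hom
      = (distR X Y (mul B A)).hom ≫ addHom (aMul X B A).hom (aMul Y B A).hom
  ann12 : ∀ (A X Y B : C),
    (aMul A (add X Y) B).hom ≫ mulHom (distL A X Y).hom (𝟙 B)
        ≫ (distR (mul A X) (mul A Y) B).hom
      = mulHom (𝟙 A) (distR X Y B).hom ≫ (distL A (mul X B) (mul Y B)).hom
        ≫ addHom (aMul A X B).hom (aMul A Y B).hom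
  ann13 : ∀ (A B X Y : C),
    (distL (add A B) X Y).hom ≫ addHom (distR A B X).hom (distR A B Y).hom
        ≫ ((aPlus (add (mul A X) (mul B X)) (mul A Y) (mul B Y)).hom
          ≫ addHom (aPlus (mul A X) (mul B X) (mul A Y)).inv (𝟙 (mul B Y))
          ≫ addHom (addHom (𝟙 (mul A X)) (csym (mul B X) (mul A Y)).hom) (𝟙 (mul B Y))
          ≫ addHom (aPlus (mul A X) (mul A Y) (mul B X)).hom (𝟙 (mul B Y))
          ≫ (aPlus (add (mul A X) (mul A Y)) (mul B X) (mul B Y)).inv)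
      = (distR A B (add X Y)).hom ≫ addHom (distL A X Y).hom (distL B X Y).hom
  -- (Ann-3)
  ann3l : ∀ (X Y : C),
    (distL one X Y).hom ≫ addHom (lu X).hom (lu Y).hom = (lu (add X Y)).hom
  ann3r : ∀ (X Y : C),
    (distR X Y one).hom ≫ addHom (ru X).hom (ru Y).hom = (ru (add X Y)).hom

namespace AnnCat

variable {C : Type u} [Groupoid.{v} C] (S : AnnCat C)

/-- The defining property of `L̂^A : A ⊗ 0 → 0`:
`g_{A⊗X} ∘ (L̂^A ⊕ id_{A⊗X}) ∘ 𝔏_{A,0,X} = id_A ⊗ g_X` for all `X`. -/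
def IsLhat (A : C) (f : S.mul A S.zero ⟶ S.zero) : Prop :=
  ∀ X : C, (S.distL A S.zero X).hom ≫ S.addHom f (𝟙 (S.mul A X)) ≫ (S.gl (S.mul A X)).hom
    = S.mulHom (𝟙 A) (S.gl X).hom

/-- The defining property of `R̂^A : 0 ⊗ A → 0`:
`g_{X⊗A} ∘ (R̂^A ⊕ id_{X⊗A}) ∘ ℜ_{0,X,A} = g_X ⊗ id_A` for all `X`. -/
def IsRhat (A : C) (f : S.mul S.zero A ⟶ S.zero) : Prop :=
  ∀ X : C, (S.distR S.zero X A).hom ≫ S.addHom f (𝟙 (S.mul X A)) ≫ (S.gl (S.mul X A)).hom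
    = S.mulHom (S.gl X).hom (𝟙 A)

/-- The functor `0 ⊕ −` is faithful. -/
lemma cancel_zl {X Y : C} {f g : X ⟶ Y}
    (h : S.addHom (𝟙 S.zero) f = S.addHom (𝟙 S.zero) g) : f = g := by
  have hf := S.gl_natural f
  have hg := S.gl_natural g
  rw [h, hg] at hf
  exact ((Iso.cancel_iso_hom_left (S.gl X) f g).mp hf.symm)

/-- The functor `− ⊕ 0` is faithful. -/
lemma cancel_zr {X Y : C} {f g : X ⟶ Y}
    (h : S.addHom f (𝟙 S.zero) = S.addHom g (𝟙 S.zero)) : f = g := by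
  have hf := S.dr_natural f
  have hg := S.dr_natural g
  rw [h, hg] at hf
  exact ((Iso.cancel_iso_hom_left (S.dr X) f g).mp hf.symm)

lemma addHom_id_comp {X : C} {Y₂ Z₂ W₂ : C} (f : Y₂ ⟶ Z₂) (g : Z₂ ⟶ W₂) :
    S.addHom (𝟙 X) (f ≫ g) = S.addHom (𝟙 X) f ≫ S.addHom (𝟙 X) g := by
  have h := S.addHom_comp (𝟙 X) (𝟙 X) f g
  rwa [Category.comp_id] at h

lemma addHom_comp_id {X : C} {Y₂ Z₂ W₂ : C} (f : Y₂ ⟶ Z₂) (g : Z₂ ⟶ W₂) :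
    S.addHom (f ≫ g) (𝟙 X) = S.addHom f (𝟙 X) ≫ S.addHom g (𝟙 X) := by
  have h := S.addHom_comp f g (𝟙 X) (𝟙 X)
  rwa [Category.comp_id] at h

lemma mulHom_id_comp {X : C} {Y₂ Z₂ W₂ : C} (f : Y₂ ⟶ Z₂) (g : Z₂ ⟶ W₂) :
    S.mulHom (𝟙 X) (f ≫ g) = S.mulHom (𝟙 X) f ≫ S.mulHom (𝟙 X) g := by
  have h := S.mulHom_comp (𝟙 X) (𝟙 X) f g
  rwa [Category.comp_id] at h

lemma mulHom_comp_id {X : C} {Y₂ Z₂ W₂ : C} (f : Y₂ ⟶ Z₂) (g : Z₂ ⟶ W₂) :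
    S.mulHom (f ≫ g) (𝟙 X) = S.mulHom f (𝟙 X) ≫ S.mulHom g (𝟙 X) := by
  have h := S.mulHom_comp f g (𝟙 X) (𝟙 X)
  rwa [Category.comp_id] at h

lemma dr_add_zero (Z : C) :
    S.addHom (S.dr Z).hom (𝟙 S.zero)
      = (S.aPlus Z S.zero S.zero).inv ≫ S.addHom (𝟙 Z) (S.gl S.zero).hom := by
  rw [← S.add_triangle Z S.zero, Iso.inv_hom_id_assoc]

/-- Kelly-style coherence: `a_{X,Y,0} ≫ d_{X⊕Y} = 1_X ⊕ d_Y`. -/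
lemma aPlus_dr (X Y : C) :
    (S.aPlus X Y S.zero).hom ≫ (S.dr (S.add X Y)).hom
      = S.addHom (𝟙 X) (S.dr Y).hom := by
  apply S.cancel_zr
  have hpent : S.addHom (𝟙 X) (S.aPlus Y S.zero S.zero).hom
        ≫ (S.aPlus X (S.add Y S.zero) S.zero).hom
        ≫ S.addHom (S.aPlus X Y S.zero).hom (𝟙 S.zero)
        ≫ (S.aPlus (S.add X Y) S.zero S.zero).inv
      = (S.aPlus X Y (S.add S.zero S.zero)).hom := by
    slice_lhs 1 3 => rw [S.add_pentagon X Y S.zero S.zero]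
    simp
  have key : S.addHom (S.aPlus X Y S.zero).hom (𝟙 S.zero)
        ≫ (S.aPlus (S.add X Y) S.zero S.zero).inv
      = (S.aPlus X (S.add Y S.zero) S.zero).inv
        ≫ S.addHom (𝟙 X) (S.aPlus Y S.zero S.zero).inv
        ≫ (S.aPlus X Y (S.add S.zero S.zero)).hom := by
    rw [← hpent]
    slice_rhs 2 3 => rw [← S.addHom_comp, Iso.inv_hom_id, Category.comp_id,
      S.addHom_id]
    simp
  calc S.addHom ((S.aPlus X Y S.zero).hom ≫ (S.dr (S.add X Y)).hom) (𝟙 S.zero)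
      = S.addHom (S.aPlus X Y S.zero).hom (𝟙 S.zero)
        ≫ S.addHom (S.dr (S.add X Y)).hom (𝟙 S.zero) := S.addHom_comp_id _ _
    _ = S.addHom (S.aPlus X Y S.zero).hom (𝟙 S.zero)
        ≫ (S.aPlus (S.add X Y) S.zero S.zero).inv
        ≫ S.addHom (𝟙 (S.add X Y)) (S.gl S.zero).hom := by rw [S.dr_add_zero]
    _ = (S.aPlus X (S.add Y S.zero) S.zero).inv
        ≫ S.addHom (𝟙 X) (S.aPlus Y S.zero S.zero).inv
        ≫ (S.aPlus X Y (S.add S.zero S.zero)).hom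
        ≫ S.addHom (𝟙 (S.add X Y)) (S.gl S.zero).hom := by
        rw [← Category.assoc, key]; simp only [Category.assoc]
    _ = (S.aPlus X (S.add Y S.zero) S.zero).inv
        ≫ S.addHom (𝟙 X) (S.aPlus Y S.zero S.zero).inv
        ≫ S.addHom (𝟙 X) (S.addHom (𝟙 Y) (S.gl S.zero).hom)
        ≫ (S.aPlus X Y S.zero).hom := by
        slice_lhs 3 4 => rw [← S.addHom_id X Y,
          ← S.aPlus_natural (𝟙 X) (𝟙 Y) (S.gl S.zero).hom]
    _ = (S.aPlus X (S.add Y S.zero) S.zero).inv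
        ≫ S.addHom (𝟙 X) (S.addHom (S.dr Y).hom (𝟙 S.zero))
        ≫ (S.aPlus X Y S.zero).hom := by
        slice_lhs 2 3 => rw [← S.addHom_id_comp, ← S.dr_add_zero]
    _ = (S.aPlus X (S.add Y S.zero) S.zero).inv
        ≫ (S.aPlus X (S.add Y S.zero) S.zero).hom
        ≫ S.addHom (S.addHom (𝟙 X) (S.dr Y).hom) (𝟙 S.zero) := by
        rw [S.aPlus_natural (𝟙 X) (S.dr Y).hom (𝟙 S.zero)]
    _ = S.addHom (S.addHom (𝟙 X) (S.dr Y).hom) (𝟙 S.zero) := by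
        rw [Iso.inv_hom_id_assoc]

/-- In the Picard structure, `g_Y = c_{0,Y} ≫ d_Y`. -/
lemma gl_eq_csym_dr (Y : C) :
    (S.gl Y).hom = (S.csym S.zero Y).hom ≫ (S.dr Y).hom := by
  apply S.cancel_zl
  have hmono := (Iso.cancel_iso_hom_right
    (S.addHom (𝟙 S.zero) (S.gl Y).hom)
    (S.addHom (𝟙 S.zero) ((S.csym S.zero Y).hom ≫ (S.dr Y).hom))
    (S.csym S.zero Y)).mp
  apply hmono
  have hex := S.add_hexagon S.zero S.zero Y
  -- postcompose the hexagon with dr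
  have lhs : (S.aPlus S.zero S.zero Y).hom ≫ (S.csym (S.add S.zero S.zero) Y).hom
        ≫ (S.aPlus Y S.zero S.zero).hom ≫ (S.dr (S.add Y S.zero)).hom
      = S.addHom (𝟙 S.zero) (S.gl Y).hom ≫ (S.csym S.zero Y).hom := by
    rw [S.aPlus_dr Y S.zero]
    have hc : (S.csym (S.add S.zero S.zero) Y).hom
          ≫ S.addHom (𝟙 Y) (S.dr S.zero).hom
        = S.addHom (S.dr S.zero).hom (𝟙 Y) ≫ (S.csym S.zero Y).hom := by
      rw [S.csym_natural (S.dr S.zero).hom (𝟙 Y)]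
    rw [hc, ← Category.assoc, S.add_triangle S.zero Y]
  have rhs : (S.addHom (𝟙 S.zero) (S.csym S.zero Y).hom ≫ (S.aPlus S.zero Y S.zero).hom
        ≫ S.addHom (S.csym S.zero Y).hom (𝟙 S.zero)) ≫ (S.dr (S.add Y S.zero)).hom
      = S.addHom (𝟙 S.zero) ((S.csym S.zero Y).hom ≫ (S.dr Y).hom)
        ≫ (S.csym S.zero Y).hom := by
    rw [S.addHom_id_comp]
    slice_lhs 3 4 => rw [S.dr_natural (S.csym S.zero Y).hom]
    slice_lhs 2 3 => rw [S.aPlus_dr S.zero Y]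
    simp only [Category.assoc]
  calc S.addHom (𝟙 S.zero) (S.gl Y).hom ≫ (S.csym S.zero Y).hom
      = (S.aPlus S.zero S.zero Y).hom ≫ (S.csym (S.add S.zero S.zero) Y).hom
        ≫ (S.aPlus Y S.zero S.zero).hom ≫ (S.dr (S.add Y S.zero)).hom := lhs.symm
    _ = ((S.aPlus S.zero S.zero Y).hom ≫ (S.csym (S.add S.zero S.zero) Y).hom
        ≫ (S.aPlus Y S.zero S.zero).hom) ≫ (S.dr (S.add Y S.zero)).hom := by
        simp only [Category.assoc]
    _ = (S.addHom (𝟙 S.zero) (S.csym S.zero Y).hom ≫ (S.aPlus S.zero Y S.zero).hom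
        ≫ S.addHom (S.csym S.zero Y).hom (𝟙 S.zero))
        ≫ (S.dr (S.add Y S.zero)).hom := by rw [hex]
    _ = S.addHom (𝟙 S.zero) ((S.csym S.zero Y).hom ≫ (S.dr Y).hom)
        ≫ (S.csym S.zero Y).hom := rhs

/-- `c_{Y,0} ≫ g_Y = d_Y`. -/
lemma csym_gl_eq_dr (Y : C) :
    (S.csym Y S.zero).hom ≫ (S.gl Y).hom = (S.dr Y).hom := by
  rw [S.gl_eq_csym_dr, ← Category.assoc, S.csym_symm, Category.id_comp]

end AnnCat

/-- In an Ann-category the ⊕-functors `(L^A, 𝔏)` and `(R^A, ℜ)` are compatible with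
the unit constraint `(0, g, d)`: besides the defining `g`-equations, the
isomorphisms `L̂^A` and `R̂^A` also satisfy the `d`-equations (2.1') and (2.2'). -/
theorem ann_Lhat_Rhat_unit_compat {C : Type u} [Groupoid.{v} C] (S : AnnCat C) (A : C)
    (LA : S.mul A S.zero ≅ S.zero) (hLA : S.IsLhat A LA.hom)
    (RA : S.mul S.zero A ≅ S.zero) (hRA : S.IsRhat A RA.hom) :
    (∀ X : C, (S.distL A X S.zero).hom ≫ S.addHom (𝟙 (S.mul A X)) LA.hom
        ≫ (S.dr (S.mul A X)).hom = S.mulHom (𝟙 A) (S.dr X).hom) ∧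
    (∀ X : C, (S.distR X S.zero A).hom ≫ S.addHom (𝟙 (S.mul X A)) RA.hom
        ≫ (S.dr (S.mul X A)).hom = S.mulHom (S.dr X).hom (𝟙 A)) := by
  constructor
  · intro X
    calc (S.distL A X S.zero).hom ≫ S.addHom (𝟙 (S.mul A X)) LA.hom
          ≫ (S.dr (S.mul A X)).hom
        = (S.distL A X S.zero).hom ≫ S.addHom (𝟙 (S.mul A X)) LA.hom
          ≫ (S.csym (S.mul A X) S.zero).hom ≫ (S.gl (S.mul A X)).hom := by
          rw [S.csym_gl_eq_dr]
      _ = (S.distL A X S.zero).hom ≫ (S.csym (S.mul A X) (S.mul A S.zero)).hom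
          ≫ S.addHom LA.hom (𝟙 (S.mul A X)) ≫ (S.gl (S.mul A X)).hom := by
          rw [← Category.assoc (S.addHom (𝟙 (S.mul A X)) LA.hom),
            S.csym_natural (𝟙 (S.mul A X)) LA.hom, Category.assoc]
      _ = S.mulHom (𝟙 A) (S.csym X S.zero).hom ≫ (S.distL A S.zero X).hom
          ≫ S.addHom LA.hom (𝟙 (S.mul A X)) ≫ (S.gl (S.mul A X)).hom := by
          rw [← Category.assoc, ← S.distL_csym A X S.zero, Category.assoc]
      _ = S.mulHom (𝟙 A) (S.csym X S.zero).hom ≫ S.mulHom (𝟙 A) (S.gl X).hom := by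
          rw [hLA X]
      _ = S.mulHom (𝟙 A) ((S.csym X S.zero).hom ≫ (S.gl X).hom) := by
          rw [← S.mulHom_id_comp]
      _ = S.mulHom (𝟙 A) (S.dr X).hom := by rw [S.csym_gl_eq_dr]
  · intro X
    calc (S.distR X S.zero A).hom ≫ S.addHom (𝟙 (S.mul X A)) RA.hom
          ≫ (S.dr (S.mul X A)).hom
        = (S.distR X S.zero A).hom ≫ S.addHom (𝟙 (S.mul X A)) RA.hom
          ≫ (S.csym (S.mul X A) S.zero).hom ≫ (S.gl (S.mul X A)).hom := by
          rw [S.csym_gl_eq_dr]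
      _ = (S.distR X S.zero A).hom ≫ (S.csym (S.mul X A) (S.mul S.zero A)).hom
          ≫ S.addHom RA.hom (𝟙 (S.mul X A)) ≫ (S.gl (S.mul X A)).hom := by
          rw [← Category.assoc (S.addHom (𝟙 (S.mul X A)) RA.hom),
            S.csym_natural (𝟙 (S.mul X A)) RA.hom, Category.assoc]
      _ = S.mulHom (S.csym X S.zero).hom (𝟙 A) ≫ (S.distR S.zero X A).hom
          ≫ S.addHom RA.hom (𝟙 (S.mul X A)) ≫ (S.gl (S.mul X A)).hom := by
          rw [← Category.assoc, ← S.distR_csym X S.zero A, Category.assoc]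
      _ = S.mulHom (S.csym X S.zero).hom (𝟙 A) ≫ S.mulHom (S.gl X).hom (𝟙 A) := by
          rw [hRA X]
      _ = S.mulHom ((S.csym X S.zero).hom ≫ (S.gl X).hom) (𝟙 A) := by
          rw [← S.mulHom_comp_id]
      _ = S.mulHom (S.dr X).hom (𝟙 A) := by rw [S.csym_gl_eq_dr]
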